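/- arXiv:1909.05955 — 4 statements merged into one kernel-verified Lean document; each statement's English description precedes it below -/
import Mathlib

section
/- In any nilpotent group G of class at most 4, for all x, y ∈ G the identity (xy)⁴ = x⁴y⁴(y,x)⁶((y,x),y)¹⁴(((y,x),y),y)¹¹((y,x),x)⁴(((y,x),x),y)¹¹(((y,x),x),x) holds. -/
/-!
Weight-4 commutators are central, and by the three subgroups lemma commutators of weight 2 and 3
commute with each other. Hence the relations `b * a = a * b * (b, a)` let one collect `(x * y) ^ 4`
into the order `x < y < (y,x) < ((y,x),y) < ((y,x),x)`, with the weight-4 commutators, which are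
central, gathered at the right. Resolving the overlap `(y,x) * y * x` of these rules in two ways
forces `(((y,x),y),x) = (((y,x),x),y)`, so only three weight-4 commutators remain.
-/

/-- The commutator `(a,b) = a⁻¹ * b⁻¹ * a * b` used in the paper. -/
def paperComm {G : Type*} [Group G] (a b : G) : G := a⁻¹ * b⁻¹ * a * b

open scoped commutatorElement

section Development

variable {G : Type*} [Group G]

theorem paperComm_eq_commutatorElement (a b : G) : paperComm a b = ⁅a⁻¹, b⁻¹⁆ := by
  simp only [paperComm, commutatorElement_def, inv_inv]

theorem paperComm_eq_one_iff {a b : G} : paperComm a b = 1 ↔ Commute a b := by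
  rw [paperComm_eq_commutatorElement, commutatorElement_eq_one_iff_commute, Commute.inv_inv_iff]

theorem mul_mul_paperComm (a b : G) : a * b * paperComm b a = b * a := by
  simp only [paperComm]; group

theorem mul_mul_eq_of_mul_eq {a b p q r : G} (h : a * b = p * q * r) (t : G) :
    a * (b * t) = p * (q * (r * t)) := by
  rw [← mul_assoc, h]; simp only [mul_assoc]

section LowerCentralSeries

variable {S : Subgroup G}

theorem paperComm_mem_lowerCentralSeries_succ {n : ℕ} {a b : G}
    (ha : a ∈ S.lowerCentralSeries n) (hb : b ∈ S) :
    paperComm a b ∈ S.lowerCentralSeries (n + 1) := by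
  rw [paperComm_eq_commutatorElement]
  exact Subgroup.commutator_mem_commutator (inv_mem ha) (inv_mem hb)

theorem commute_of_mem_lowerCentralSeries {n : ℕ} (h : S.lowerCentralSeries (n + 1) = ⊥)
    {a b : G} (ha : a ∈ S.lowerCentralSeries n) (hb : b ∈ S) : Commute a b := by
  rw [← paperComm_eq_one_iff, ← Subgroup.mem_bot, ← h]
  exact paperComm_mem_lowerCentralSeries_succ ha hb

theorem commutator_lowerCentralSeries_one_eq_bot {n : ℕ} (h : S.lowerCentralSeries (n + 3) = ⊥) :
    ⁅S.lowerCentralSeries 1, S.lowerCentralSeries (n + 1)⁆ = ⊥ := by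
  apply Subgroup.commutator_commutator_eq_bot_of_rotate
  · rw [Subgroup.commutator_comm S]; exact h
  · exact h

theorem commute_of_mem_lowerCentralSeries_one {n : ℕ} (h : S.lowerCentralSeries (n + 3) = ⊥)
    {a b : G} (ha : a ∈ S.lowerCentralSeries 1) (hb : b ∈ S.lowerCentralSeries (n + 1)) :
    Commute a b := by
  rw [← commutatorElement_eq_one_iff_commute, ← Subgroup.mem_bot,
    ← commutator_lowerCentralSeries_one_eq_bot h]
  exact Subgroup.commutator_mem_commutator ha hb

end LowerCentralSeries

section Collection

variable {x y c u v : G}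

/-- Collecting `c * y * x` starting from `c * y` or from `y * x` must give the same normal form. -/
theorem eq_of_overlap_collection {e e' : G} (hyx : y * x = x * y * c)
    (hcx : c * x = x * c * u) (hcy : c * y = y * c * v) (huy : u * y = y * u * e)
    (hvx : v * x = x * v * e') (hcu : Commute c u) (hcv : Commute c v) (huv : Commute u v)
    (he : Commute e c) : e' = e := by
  have h₁ : c * y * x = x * (y * (c * (c * (v * (u * e'))))) := by
    rw [hcy]
    simp only [mul_assoc, hvx, mul_mul_eq_of_mul_eq hcx, mul_mul_eq_of_mul_eq hyx, huv.left_comm]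
  have h₂ : c * y * x = x * (y * (c * (c * (v * (u * e))))) := by
    simp only [mul_assoc, hyx, mul_mul_eq_of_mul_eq hcx, mul_mul_eq_of_mul_eq huy, he.eq,
      mul_mul_eq_of_mul_eq hcy, hcu.symm.left_comm, hcv.symm.left_comm]
  simpa only [mul_right_inj] using h₁.symm.trans h₂

theorem mul_pow_four_eq_of_relations {e₁ e₂ e₃ : G}
    (hyx : y * x = x * y * c) (hcx : c * x = x * c * u) (hcy : c * y = y * c * v)
    (hux : u * x = x * u * e₁) (huy : u * y = y * u * e₂)
    (hvx : v * x = x * v * e₂) (hvy : v * y = y * v * e₃)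
    (hcu : Commute c u) (hcv : Commute c v) (huv : Commute u v)
    (he₁ : ∀ g, Commute e₁ g) (he₂ : ∀ g, Commute e₂ g) (he₃ : ∀ g, Commute e₃ g) :
    (x * y) ^ 4 = x ^ 4 * y ^ 4 * c ^ 6 * v ^ 14 * e₃ ^ 11 * u ^ 4 * e₂ ^ 11 * e₁ := by
  -- collect into the order `x < y < c < v < u`, central letters to the right
  simp only [pow_succ, pow_zero, one_mul, mul_assoc, hcy,
    mul_mul_eq_of_mul_eq hyx, mul_mul_eq_of_mul_eq hcx, mul_mul_eq_of_mul_eq hcy,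
    mul_mul_eq_of_mul_eq hux, mul_mul_eq_of_mul_eq huy, mul_mul_eq_of_mul_eq hvx,
    mul_mul_eq_of_mul_eq hvy, hcu.symm.left_comm, hcv.symm.left_comm, huv.left_comm,
    (he₁ y).left_comm, (he₂ y).eq, (he₂ x).left_comm, (he₂ y).left_comm, (he₂ c).left_comm,
    (he₂ u).left_comm, (he₂ v).left_comm, (he₂ e₁).left_comm, (he₃ y).eq, (he₃ u).eq,
    (he₃ e₁).eq, (he₃ e₂).eq, (he₃ x).left_comm, (he₃ y).left_comm, (he₃ c).left_comm,
    (he₃ u).left_comm, (he₃ v).left_comm, (he₃ e₁).left_comm, (he₃ e₂).left_comm]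

end Collection

end Development

/-- The collection formula for fourth powers in a nilpotent group of class at most 4. -/
theorem collect_formula {G : Type*} [Group G]
    (hnil : (⊤ : Subgroup G).lowerCentralSeries 4 = ⊥) (x y : G) :
    (x * y) ^ 4 =
      x ^ 4 * y ^ 4 * (paperComm y x) ^ 6 *
        (paperComm (paperComm y x) y) ^ 14 *
        (paperComm (paperComm (paperComm y x) y) y) ^ 11 *
        (paperComm (paperComm y x) x) ^ 4 *
        (paperComm (paperComm (paperComm y x) x) y) ^ 11 *
        (paperComm (paperComm (paperComm y x) x) x) := by
  have top (g : G) : g ∈ (⊤ : Subgroup G) := Subgroup.mem_top g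
  set c := paperComm y x
  set u := paperComm c x
  set v := paperComm c y
  have hc : c ∈ (⊤ : Subgroup G).lowerCentralSeries 1 :=
    paperComm_mem_lowerCentralSeries_succ (top y) (top x)
  have hu : u ∈ (⊤ : Subgroup G).lowerCentralSeries 2 :=
    paperComm_mem_lowerCentralSeries_succ hc (top x)
  have hv : v ∈ (⊤ : Subgroup G).lowerCentralSeries 2 :=
    paperComm_mem_lowerCentralSeries_succ hc (top y)
  have hcu : Commute c u := commute_of_mem_lowerCentralSeries_one hnil hc hu
  have hcv : Commute c v := commute_of_mem_lowerCentralSeries_one hnil hc hv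
  have huv : Commute u v := (commute_of_mem_lowerCentralSeries_one hnil
    (paperComm_mem_lowerCentralSeries_succ (top c) (top y)) hu).symm
  have central {a : G} (ha : a ∈ (⊤ : Subgroup G).lowerCentralSeries 2) (b g : G) :
      Commute (paperComm a b) g :=
    commute_of_mem_lowerCentralSeries hnil
      (paperComm_mem_lowerCentralSeries_succ ha (top b)) (top g)
  have hvx : v * x = x * v * paperComm u y := by
    rw [← eq_of_overlap_collection (mul_mul_paperComm x y).symm (mul_mul_paperComm x c).symm
      (mul_mul_paperComm y c).symm (mul_mul_paperComm y u).symm (mul_mul_paperComm x v).symm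
      hcu hcv huv (central hu y c)]
    exact (mul_mul_paperComm x v).symm
  exact mul_pow_four_eq_of_relations (mul_mul_paperComm x y).symm (mul_mul_paperComm x c).symm
    (mul_mul_paperComm y c).symm (mul_mul_paperComm x u).symm (mul_mul_paperComm y u).symm hvx
    (mul_mul_paperComm y v).symm hcu hcv huv (central hu x) (central hu y) (central hv y)
end

section
/- In any nilpotent group G of class at most 4, for all x, y ∈ G: (((y,x),y),x) = (((y,x),x),y); that is, the two left-normed commutators of weight 4 obtained from ((y,x),·,·) by switching the last two entries y and x are equal. -/
open scoped commutatorElement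

section aux
variable {G : Type*} [Group G]

lemma pc_mem {n : ℕ} {a : G} (b : G) (ha : a ∈ (⊤ : Subgroup G).lowerCentralSeries n) :
    paperComm a b ∈ (⊤ : Subgroup G).lowerCentralSeries (n + 1) := by
  have h : paperComm a b = ⁅a⁻¹, b⁻¹⁆ := by
    simp only [paperComm, commutatorElement_def, inv_inv]
  rw [h]
  exact Subgroup.commutator_mem_commutator (inv_mem ha) (Subgroup.mem_top _)

lemma central_inv {g : G} (h : ∀ x : G, g * x = x * g) (x : G) : g⁻¹ * x = x * g⁻¹ := by
  calc g⁻¹ * x = g⁻¹ * (x * g) * g⁻¹ := by group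
    _ = g⁻¹ * (g * x) * g⁻¹ := by rw [h x]
    _ = x * g⁻¹ := by group

lemma conj_central (g a : G) (h : ∀ x : G, g * x = x * g) : a⁻¹ * g * a = g := by
  rw [← h a⁻¹]; group

lemma conj_central' (g a : G) (h : ∀ x : G, g * x = x * g) : a * g * a⁻¹ = g := by
  rw [← h a]; group

lemma pc_self (a : G) : paperComm a a = 1 := by
  simp only [paperComm]; group

lemma pc_one_of_central (a b : G) (h : ∀ g : G, a * g = g * a) :
    paperComm a b = 1 := by
  have key : paperComm a b = a⁻¹ * (b⁻¹ * a * b) := by simp only [paperComm]; group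
  rw [key, conj_central a b h]; group

lemma pc_mul_left (a b c : G) (h : ∀ g : G, paperComm a c * g = g * paperComm a c) :
    paperComm (a * b) c = paperComm a c * paperComm b c := by
  have key : paperComm (a * b) c = b⁻¹ * paperComm a c * b * paperComm b c := by
    simp only [paperComm]; group
  rw [key, conj_central _ _ h]

lemma pc_inv_left (a b : G) (h : ∀ g : G, paperComm a b * g = g * paperComm a b) :
    paperComm a⁻¹ b = (paperComm a b)⁻¹ := by
  have key : paperComm a⁻¹ b = a * (paperComm a b)⁻¹ * a⁻¹ := by
    simp only [paperComm]; group
  rw [key]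
  exact conj_central' _ _ (central_inv h)

lemma pc_mul_right (a b c : G) (h : ∀ g : G, paperComm a b * g = g * paperComm a b) :
    paperComm a (b * c) = paperComm a b * paperComm a c := by
  have key : paperComm a (b * c) = paperComm a c * (c⁻¹ * paperComm a b * c) := by
    simp only [paperComm]; group
  rw [key, conj_central _ _ h, ← h (paperComm a c)]

lemma pc_inv_right (a b : G) (h : ∀ g : G, paperComm a b * g = g * paperComm a b) :
    paperComm a b⁻¹ = (paperComm a b)⁻¹ := by
  have key : paperComm a b⁻¹ = b * (paperComm a b)⁻¹ * b⁻¹ := by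
    simp only [paperComm]; group
  rw [key]
  exact conj_central' _ _ (central_inv h)

lemma hall_witt (a b c : G) :
    (b⁻¹ * paperComm (paperComm a b⁻¹) c * b) *
      ((c⁻¹ * paperComm (paperComm b c⁻¹) a * c) *
        (a⁻¹ * paperComm (paperComm c a⁻¹) b * a)) = 1 := by
  simp only [paperComm]; group

end aux

/-- Hall–Witt consequence in nilpotent groups of class at most 4:
`(y,x,y,x) = (y,x,x,y)`. -/
theorem weight4_swap {G : Type*} [Group G]
    (hnil : (⊤ : Subgroup G).lowerCentralSeries 4 = ⊥) (x y : G) :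
    paperComm (paperComm (paperComm y x) y) x =
      paperComm (paperComm (paperComm y x) x) y := by
  set K := paperComm y x with hKdef
  set L := paperComm K y with hLdef
  set M := paperComm K x with hMdef
  -- elements of the third lower central subgroup are central
  have hZ : ∀ g ∈ (⊤ : Subgroup G).lowerCentralSeries 3, ∀ h : G, g * h = h * g := by
    intro g hg h
    have hm : ⁅g, h⁆ ∈ (⁅(⊤ : Subgroup G).lowerCentralSeries 3, (⊤ : Subgroup G)⁆ : Subgroup G) :=
      Subgroup.commutator_mem_commutator hg (Subgroup.mem_top h)
    have h4 : (⁅(⊤ : Subgroup G).lowerCentralSeries 3, (⊤ : Subgroup G)⁆ : Subgroup G) = ⊥ := hnil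
    rw [h4, Subgroup.mem_bot] at hm
    exact commutatorElement_eq_one_iff_mul_comm.mp hm
  have hK : K ∈ (⊤ : Subgroup G).lowerCentralSeries 1 :=
    pc_mem x (show y ∈ (⊤ : Subgroup G).lowerCentralSeries 0 from Subgroup.mem_top y)
  have hL : L ∈ (⊤ : Subgroup G).lowerCentralSeries 2 := pc_mem y hK
  have hM : M ∈ (⊤ : Subgroup G).lowerCentralSeries 2 := pc_mem x hK
  -- commutators with a weight-3 entry are central
  have c2 : ∀ z ∈ (⊤ : Subgroup G).lowerCentralSeries 2, ∀ w g : G,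
      paperComm z w * g = g * paperComm z w := fun z hz w g => hZ _ (pc_mem w hz) g
  -- Step A : paperComm (paperComm K x⁻¹) y = (paperComm M y)⁻¹
  have eA : paperComm (paperComm K x⁻¹) y = (paperComm M y)⁻¹ := by
    have k1 : paperComm K x⁻¹ = M⁻¹ * ⁅M, x⁆ := by
      rw [hMdef]; simp only [paperComm, commutatorElement_def]; group
    have hc1 : (⁅M, x⁆ : G) ∈ (⊤ : Subgroup G).lowerCentralSeries 3 :=
      Subgroup.commutator_mem_commutator hM (Subgroup.mem_top x)
    rw [k1, pc_mul_left _ _ _ (c2 _ (inv_mem hM) y),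
      pc_one_of_central _ _ (hZ _ hc1), mul_one,
      pc_inv_left _ _ (c2 _ hM y)]
  -- Step B : paperComm (paperComm y K⁻¹) x = paperComm L x
  have eB : paperComm (paperComm y K⁻¹) x = paperComm L x := by
    have k2 : paperComm y K⁻¹ = L * ⁅L⁻¹, K⁆ := by
      rw [hLdef]; simp only [paperComm, commutatorElement_def]; group
    have hc2 : (⁅L⁻¹, K⁆ : G) ∈ (⊤ : Subgroup G).lowerCentralSeries 3 :=
      Subgroup.commutator_mem_commutator (inv_mem hL) (Subgroup.mem_top K)
    rw [k2, pc_mul_left _ _ _ (c2 _ hL x),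
      pc_one_of_central _ _ (hZ _ hc2), mul_one]
  -- Step C : paperComm (paperComm x y⁻¹) K = 1
  have eC : paperComm (paperComm x y⁻¹) K = 1 := by
    have k3 : paperComm x y⁻¹ = K * ⁅K⁻¹, y⁆ := by
      rw [hKdef]; simp only [paperComm, commutatorElement_def]; group
    have hc3 : (⁅K⁻¹, y⁆ : G) ∈ (⊤ : Subgroup G).lowerCentralSeries 2 :=
      Subgroup.commutator_mem_commutator (inv_mem hK) (Subgroup.mem_top y)
    have hKK : ∀ g : G, paperComm K K * g = g * paperComm K K := by
      intro g; rw [pc_self]; group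
    have hKexp : K = y⁻¹ * (x⁻¹ * (y * x)) := by
      rw [hKdef]; simp only [paperComm]; group
    have genC : ∀ z : G, (∀ w g : G, paperComm z w * g = g * paperComm z w) →
        paperComm z (y⁻¹ * (x⁻¹ * (y * x))) = 1 := by
      intro z hc
      rw [pc_mul_right _ _ _ (hc y⁻¹), pc_mul_right _ _ _ (hc x⁻¹),
        pc_mul_right _ _ _ (hc y), pc_inv_right _ _ (hc y), pc_inv_right _ _ (hc x),
        hc y (paperComm z x)]
      group
    have := genC ⁅K⁻¹, y⁆ (c2 _ hc3)
    rw [← hKexp] at this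
    rw [k3, pc_mul_left _ _ _ hKK, pc_self, one_mul, this]
  -- assemble via the Hall–Witt identity with (a, b, c) = (K, x, y)
  have HW := hall_witt K x y
  rw [eA, eB, eC,
    conj_central _ _ (central_inv (hZ _ (pc_mem y hM))),
    conj_central _ _ (hZ _ (pc_mem x hL))] at HW
  have HW2 : (paperComm M y)⁻¹ * paperComm L x = 1 := by rw [← HW]; group
  exact (inv_mul_eq_one.mp HW2).symm
end

section
/- Let G be a group of exponent dividing 4, metabelian, and nilpotent of class at most 4. Then γ₃(G) has exponent dividing 2, i.e., h² = 1 for every h ∈ γ₃(G). -/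
/-!
Take `c ∈ γ₂` and `z ∈ G`, and put `t = ⁅c, z⁆`, `u = ⁅t, z⁆`. Conjugation by `z` sends
`c ↦ t⁻¹ c` and `t⁻¹ ↦ t⁻¹ u`, and fixes `u` because `⁅u, z⁆ ∈ γ₅ = 1`. As `c, t, u` lie in the
abelian group `γ₂`, collecting the `z`'s in `(c z)⁴` gives `(c z)⁴ = t⁻⁶ u⁴ c⁴ z⁴`, so exponent 4
forces `t⁶ = 1` and hence `t² = 1`. The commutators `t` generate `γ₃`, which is abelian, so every
element of `γ₃` squares to `1`. (Mathlib's `lowerCentralSeries n` is `γₙ₊₁`.)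
-/

open scoped commutatorElement
open Subgroup

section

variable {G : Type*} [Group G]

theorem commutatorElement_inv_mul_mul (g z : G) : ⁅g, z⁆⁻¹ * g * z = z * g := by
  simp [commutatorElement_def, mul_assoc]

theorem inv_mul_commutatorElement_mul (g z : G) : g⁻¹ * ⁅g, z⁆ * z = z * g⁻¹ := by
  simp [commutatorElement_def, mul_assoc]

theorem mul_pow_four_eq_of_conj {a c u z : G} (hzc : z * c = a * c * z) (hza : z * a = a * u * z)
    (hzu : Commute z u) (hca : Commute c a) (hua : Commute u a) (hcu : Commute c u) :
    (c * z) ^ 4 = a ^ 6 * u ^ 4 * c ^ 4 * z ^ 4 := by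
  have hzc' (r : G) : z * (c * r) = a * (c * (z * r)) := by
    rw [← mul_assoc, hzc, mul_assoc, mul_assoc]
  have hza' (r : G) : z * (a * r) = a * (u * (z * r)) := by
    rw [← mul_assoc, hza, mul_assoc, mul_assoc]
  simp only [pow_succ, pow_zero, one_mul, mul_assoc, hzc', hza', hzu.left_comm, hca.left_comm,
    hua.left_comm, hcu.left_comm]

theorem commutatorElement_sq_eq_one_of_pow_four_eq_one (hexp : ∀ x : G, x ^ 4 = 1) {c z : G}
    (hct : Commute c ⁅c, z⁆) (hcu : Commute c ⁅⁅c, z⁆, z⁆) (htu : Commute ⁅c, z⁆ ⁅⁅c, z⁆, z⁆)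
    (hz : ⁅⁅⁅c, z⁆, z⁆, z⁆ = 1) : ⁅c, z⁆ ^ 2 = 1 := by
  have collect := mul_pow_four_eq_of_conj (commutatorElement_inv_mul_mul c z).symm
    (inv_mul_commutatorElement_mul ⁅c, z⁆ z).symm (commutatorElement_eq_one_iff_commute.mp hz).symm
    hct.inv_right htu.symm.inv_right hcu
  have h6 : ⁅c, z⁆ ^ 6 = 1 := by
    rwa [hexp, hexp, hexp, hexp, mul_one, mul_one, mul_one, inv_pow, eq_comm, inv_eq_one] at collect
  calc ⁅c, z⁆ ^ 2 = ⁅c, z⁆ ^ 4 * ⁅c, z⁆ ^ 2 := by rw [hexp, one_mul]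
    _ = 1 := by rw [← pow_add, h6]

theorem pow_eq_one_of_mem_closure {n : ℕ} {S : Set G}
    (hcomm : ∀ a ∈ closure S, ∀ b ∈ closure S, Commute a b) (hS : ∀ s ∈ S, s ^ n = 1) {x : G}
    (hx : x ∈ closure S) : x ^ n = 1 := by
  induction hx using closure_induction with
  | mem s hs => exact hS s hs
  | one => exact one_pow n
  | mul a b ha hb iha ihb => rw [(hcomm a ha b hb).mul_pow, iha, ihb, one_mul]
  | inv a _ ih => rw [inv_pow, ih, inv_one]

end

theorem gamma3_exponent_two {G : Type*} [Group G]
    (hexp : ∀ x : G, x ^ 4 = 1)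
    (hmet : ∀ a ∈ (⊤ : Subgroup G).lowerCentralSeries 1, ∀ b ∈ (⊤ : Subgroup G).lowerCentralSeries 1, a * b = b * a)
    (hnil : (⊤ : Subgroup G).lowerCentralSeries 4 = ⊥) :
    ∀ h ∈ (⊤ : Subgroup G).lowerCentralSeries 2, h ^ 2 = 1 := by
  set γ := (⊤ : Subgroup G).lowerCentralSeries
  have γ2 : γ 2 ≤ γ 1 := (⊤ : Subgroup G).lowerCentralSeries_antitone one_le_two
  have γ3 : γ 3 ≤ γ 1 := (⊤ : Subgroup G).lowerCentralSeries_antitone (by norm_num)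
  intro h hh
  refine pow_eq_one_of_mem_closure (fun a ha b hb => hmet a (γ2 ha) b (γ2 hb)) ?_ hh
  rintro _ ⟨c, hc, z, -, rfl⟩
  have ht : ⁅c, z⁆ ∈ γ 2 := commutator_mem_commutator hc (mem_top z)
  have hu : ⁅⁅c, z⁆, z⁆ ∈ γ 3 := commutator_mem_commutator ht (mem_top z)
  have hv : ⁅⁅⁅c, z⁆, z⁆, z⁆ ∈ γ 4 := commutator_mem_commutator hu (mem_top z)
  rw [hnil, mem_bot] at hv
  exact commutatorElement_sq_eq_one_of_pow_four_eq_one hexp (hmet _ hc _ (γ2 ht))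
    (hmet _ hc _ (γ3 hu)) (hmet _ (γ2 ht) _ (γ3 hu)) hv
end

section
/- Let G be a group of exponent dividing 4, metabelian, and nilpotent of class at most 4. Then for all a, b, c ∈ G: (ab, c)² = (a,c)²(b,c)² and (a, bc)² = (a,c)²(a,b)². -/
open scoped commutatorElement

theorem mul_pow_four_of_conj {G : Type*} [Group G] {s β d e : G}
    (hβ : s⁻¹ * β * s = β * d) (hd : s⁻¹ * d * s = d * e) (he : Commute e s)
    (hβd : Commute β d) (hβe : Commute β e) (hde : Commute d e) :
    (s * β) ^ 4 = s ^ 4 * (β ^ 4 * d ^ 6 * e ^ 4) := by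
  set φ := MulAut.conj s⁻¹
  have hφ (x : G) : φ x = s⁻¹ * x * s := by simp [φ]
  have hφβ : φ β = β * d := by rw [hφ, hβ]
  have hφd : φ d = d * e := by rw [hφ, hd]
  have hφe : φ e = e := by rw [hφ, mul_assoc, he.eq, inv_mul_cancel_left]
  have hφ2 : φ (φ β) = β * d ^ 2 * e := by
    rw [hφβ, map_mul, hφβ, hφd]
    simp only [sq, mul_assoc]
  have hφ3 : φ (φ (φ β)) = β * d ^ 3 * e ^ 3 := by
    rw [hφ2, map_mul, map_mul, map_pow, hφβ, hφd, hφe, hde.mul_pow]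
    simp only [pow_succ, pow_zero, one_mul, mul_assoc]
  have expand : (s * β) ^ 4 = s ^ 4 * (φ (φ (φ β)) * φ (φ β) * φ β * β) := by
    simp only [hφ, pow_succ, pow_zero, one_mul]; group
  rw [expand, hφ3, hφ2, hφβ]
  congr 1
  -- move every `β` to the front, then every `d`
  simp only [pow_succ, pow_zero, one_mul, mul_assoc, hβe.symm.eq, hde.symm.eq,
    hβd.symm.left_comm, hβe.symm.left_comm, hde.symm.left_comm]

namespace paperComm

variable {G : Type*} [Group G]

theorem eq_commutatorElement (a b : G) : paperComm a b = ⁅a⁻¹, b⁻¹⁆ := by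
  simp [paperComm, commutatorElement_def]

theorem eq_one_iff_commute {a b : G} : paperComm a b = 1 ↔ Commute a b := by
  rw [eq_commutatorElement, commutatorElement_eq_one_iff_commute, Commute.inv_inv_iff]

theorem inv_mul_mul_eq (x s : G) : s⁻¹ * x * s = x * paperComm x s := by
  simp only [paperComm]; group

theorem mul_left (a b c : G) :
    paperComm (a * b) c = paperComm a c * (paperComm (paperComm a c) b * paperComm b c) := by
  simp only [paperComm]; group

theorem mul_right (a b c : G) :
    paperComm a (b * c) = paperComm a c * (paperComm a b * paperComm (paperComm a b) c) := by
  simp only [paperComm]; group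

theorem mem_lowerCentralSeries_succ {n : ℕ} {a : G}
    (ha : a ∈ (⊤ : Subgroup G).lowerCentralSeries n) (b : G) :
    paperComm a b ∈ (⊤ : Subgroup G).lowerCentralSeries (n + 1) := by
  rw [eq_commutatorElement]
  exact Subgroup.lowerCentralSeries_isDescendingCentralSeries.2 _ n (inv_mem ha) _

theorem mem_lowerCentralSeries_one (a b : G) :
    paperComm a b ∈ (⊤ : Subgroup G).lowerCentralSeries 1 :=
  mem_lowerCentralSeries_succ (Subgroup.mem_top a) b

theorem sq_eq_one (hexp : ∀ x : G, x ^ 4 = 1)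
    (hmet : ∀ a ∈ (⊤ : Subgroup G).lowerCentralSeries 1,
      ∀ b ∈ (⊤ : Subgroup G).lowerCentralSeries 1, a * b = b * a)
    (hnil : (⊤ : Subgroup G).lowerCentralSeries 4 = ⊥) {β : G}
    (hβ : β ∈ (⊤ : Subgroup G).lowerCentralSeries 1) (s : G) :
    paperComm β s ^ 2 = 1 := by
  set d := paperComm β s
  set e := paperComm d s
  have he : e ∈ (⊤ : Subgroup G).lowerCentralSeries 3 :=
    mem_lowerCentralSeries_succ (mem_lowerCentralSeries_succ hβ s) s
  have hes : Commute e s := by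
    rw [← eq_one_iff_commute, ← Subgroup.mem_bot, ← hnil]
    exact mem_lowerCentralSeries_succ he s
  have h := mul_pow_four_of_conj (inv_mul_mul_eq β s) (inv_mul_mul_eq d s) hes
    (hmet _ hβ _ (mem_lowerCentralSeries_one β s)) (hmet _ hβ _ (mem_lowerCentralSeries_one d s))
    (hmet _ (mem_lowerCentralSeries_one β s) _ (mem_lowerCentralSeries_one d s))
  simp only [hexp, one_mul, mul_one] at h
  calc d ^ 2 = d ^ 2 * d ^ 4 := by rw [hexp, mul_one]
    _ = 1 := by rw [← pow_add, h]

end paperComm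

theorem comm_sq_distrib {G : Type*} [Group G]
    (hexp : ∀ x : G, x ^ 4 = 1)
    (hmet : ∀ a ∈ (⊤ : Subgroup G).lowerCentralSeries 1, ∀ b ∈ (⊤ : Subgroup G).lowerCentralSeries 1, a * b = b * a)
    (hnil : (⊤ : Subgroup G).lowerCentralSeries 4 = ⊥) (a b c : G) :
    (paperComm (a * b) c) ^ 2 = (paperComm a c) ^ 2 * (paperComm b c) ^ 2 ∧
    (paperComm a (b * c)) ^ 2 = (paperComm a c) ^ 2 * (paperComm a b) ^ 2 := by
  have hcomm (w x y z : G) : Commute (paperComm w x) (paperComm y z) :=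
    hmet _ (paperComm.mem_lowerCentralSeries_one w x) _ (paperComm.mem_lowerCentralSeries_one y z)
  have hsq (x y z : G) : paperComm (paperComm x y) z ^ 2 = 1 :=
    paperComm.sq_eq_one hexp hmet hnil (paperComm.mem_lowerCentralSeries_one x y) z
  constructor
  · rw [paperComm.mul_left, ((hcomm _ _ _ _).mul_right (hcomm _ _ _ _)).mul_pow,
      (hcomm _ _ _ _).mul_pow, hsq, one_mul]
  · rw [paperComm.mul_right, ((hcomm _ _ _ _).mul_right (hcomm _ _ _ _)).mul_pow,
      (hcomm _ _ _ _).mul_pow, hsq, mul_one]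
end
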